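/- arXiv:2105.14610 — 7 statements merged into one kernel-verified Lean document; each statement's English description precedes it below -/
import Mathlib

section
/- Let K be a field and V1, V2, V3 vector spaces over K. Let L : V1 → V2 be a K-linear map of rank at least 2, in the sense that there exist vectors v1, v2 ∈ V1 such that L v1 and L v2 are linearly independent. Let f : V1 → V3 be an arbitrary function, and suppose there exists a K-linear map Λ : V1 → V2 ⊗[K] V3 such that Λ x = (L x) ⊗ₜ (f x) for every x ∈ V1. Then for all x, y ∈ V1 with L x ≠ 0 and L y ≠ 0, one has f x = f y. -/
open TensorProduct

lemma aux_tensor_eq_zero {K : Type*} [Field K] {V2 V3 : Type*}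
    [AddCommGroup V2] [Module K V2] [AddCommGroup V3] [Module K V3]
    {u w : V2} (h : LinearIndependent K ![u, w]) {a b : V3}
    (hab : u ⊗ₜ[K] a + w ⊗ₜ[K] b = 0) : a = 0 ∧ b = 0 := by
  have hu : u ∉ Submodule.span K {w} := by
    intro hmem
    rw [Submodule.mem_span_singleton] at hmem
    obtain ⟨c, hc⟩ := hmem
    have := LinearIndependent.pair_iff.1 h 1 (-c) (by simp [← hc])
    simpa using this.1
  have hw : w ∉ Submodule.span K {u} := by
    intro hmem
    rw [Submodule.mem_span_singleton] at hmem
    obtain ⟨c, hc⟩ := hmem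
    have := LinearIndependent.pair_iff.1 h (-c) 1 (by simp [← hc])
    simpa using this.2
  have key : ∀ (p q : V2) (c d : V3), p ∉ Submodule.span K {q} →
      p ⊗ₜ[K] c + q ⊗ₜ[K] d = 0 → c = 0 := by
    intro p q c d hp hpq
    obtain ⟨φ, hφp, hφmap⟩ := Submodule.exists_dual_map_eq_bot_of_notMem hp inferInstance
    have hφq : φ q = 0 := by
      have : φ q ∈ (Submodule.span K {q}).map φ :=
        Submodule.mem_map_of_mem (Submodule.mem_span_singleton_self q)
      rw [hφmap] at this
      simpa using this
    have := congrArg (fun t => TensorProduct.lid K V3 (LinearMap.rTensor V3 φ t)) hpq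
    simpa [hφq, hφp] using this
  refine ⟨key u w a b hu hab, key w u b a hw ?_⟩
  rw [add_comm] at hab; exact hab

lemma aux_indep_case {K : Type*} [Field K]
    {V1 V2 V3 : Type*}
    [AddCommGroup V1] [Module K V1]
    [AddCommGroup V2] [Module K V2]
    [AddCommGroup V3] [Module K V3]
    (L : V1 →ₗ[K] V2) (f : V1 → V3)
    (Λ : V1 →ₗ[K] V2 ⊗[K] V3)
    (hΛ : ∀ x : V1, Λ x = L x ⊗ₜ[K] f x)
    (x y : V1) (h : LinearIndependent K ![L x, L y]) : f x = f y := by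
  have hsum : Λ (x + y) = Λ x + Λ y := map_add Λ x y
  rw [hΛ, hΛ, hΛ, map_add] at hsum
  have heq : L x ⊗ₜ[K] (f (x + y) - f x) + L y ⊗ₜ[K] (f (x + y) - f y) = 0 := by
    rw [TensorProduct.tmul_sub, TensorProduct.tmul_sub, TensorProduct.add_tmul] at *
    rw [sub_add_sub_comm, sub_eq_zero]
    exact hsum
  obtain ⟨h1, h2⟩ := aux_tensor_eq_zero h heq
  rw [sub_eq_zero] at h1 h2
  rw [← h1, h2]

theorem function_constancy_criterion
    {K : Type*} [Field K]
    {V1 V2 V3 : Type*}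
    [AddCommGroup V1] [Module K V1]
    [AddCommGroup V2] [Module K V2]
    [AddCommGroup V3] [Module K V3]
    (L : V1 →ₗ[K] V2)
    (hrank : ∃ v1 v2 : V1, LinearIndependent K ![L v1, L v2])
    (f : V1 → V3)
    (Λ : V1 →ₗ[K] V2 ⊗[K] V3)
    (hΛ : ∀ x : V1, Λ x = L x ⊗ₜ[K] f x) :
    ∀ x y : V1, L x ≠ 0 → L y ≠ 0 → f x = f y := by
  intro x y hx hy
  by_cases hind : LinearIndependent K ![L x, L y]
  · exact aux_indep_case L f Λ hΛ x y hind
  · -- L y = c • L x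
    rw [LinearIndependent.pair_iff' hx] at hind
    push_neg at hind
    obtain ⟨c, hc⟩ := hind
    have hcne : c ≠ 0 := by rintro rfl; simp [hc.symm] at hy
    obtain ⟨v1, v2, hv⟩ := hrank
    have hv1 : L v1 ≠ 0 := by
      intro h0
      exact one_ne_zero (LinearIndependent.pair_iff.1 hv 1 0 (by simp [h0])).1
    -- find z with ![L x, L z] linearly independent
    have hz : ∃ z : V1, LinearIndependent K ![L x, L z] := by
      by_cases h1 : LinearIndependent K ![L x, L v1]
      · exact ⟨v1, h1⟩
      · refine ⟨v2, ?_⟩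
        rw [LinearIndependent.pair_iff' hx] at h1 ⊢
        push_neg at h1
        obtain ⟨d, hd⟩ := h1
        have hdne : d ≠ 0 := by rintro rfl; simp [hd.symm] at hv1
        intro a ha
        have : (a * d⁻¹) • L v1 = L v2 := by
          rw [← hd, smul_smul, mul_assoc, inv_mul_cancel₀ hdne, mul_one, ha]
        exact (LinearIndependent.pair_iff' hv1).1 hv (a * d⁻¹) this
    obtain ⟨z, hzx⟩ := hz
    have hzy : LinearIndependent K ![L y, L z] := by
      rw [LinearIndependent.pair_iff' hy]
      intro a ha
      have : (a * c) • L x = L z := by rw [mul_smul, hc, ha]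
      exact (LinearIndependent.pair_iff' hx).1 hzx (a * c) this
    have h1 := aux_indep_case L f Λ hΛ x z hzx
    have h2 := aux_indep_case L f Λ hΛ y z hzy
    rw [h1, h2]
end

section
/- Let n be a finite type and σ : Matrix n n ℂ a nonzero positive semidefinite matrix. Then (σ * σ).trace = (σ.trace)^2 if and only if there exists a nonzero vector ψ : n → ℂ with σ = Matrix.vecMulVec ψ (star ψ). -/
open Matrix ComplexOrder

theorem pure_state_criterion
    {n : Type*} [Fintype n]
    (σ : Matrix n n ℂ) (hσ : σ.PosSemidef) (hσ0 : σ ≠ 0) :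
    (σ * σ).trace = σ.trace ^ 2 ↔
      ∃ ψ : n → ℂ, ψ ≠ 0 ∧ σ = Matrix.vecMulVec ψ (star ψ) := by
  classical
  constructor
  · intro htr
    set U := (hσ.1.eigenvectorUnitary : Matrix n n ℂ) with hUdef
    set lam := hσ.1.eigenvalues with hlam
    set D := (Matrix.diagonal (RCLike.ofReal ∘ lam) : Matrix n n ℂ) with hD
    have hspec : σ = U * D * star U := hσ.1.spectral_theorem
    have hUU : star U * U = 1 :=
      (Matrix.mem_unitaryGroup_iff').mp hσ.1.eigenvectorUnitary.2
    have htr1 : σ.trace = ∑ i, (lam i : ℂ) := by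
      rw [hspec, Matrix.trace_mul_cycle, hUU, one_mul, hD, Matrix.trace_diagonal]
      rfl
    have htr2 : (σ * σ).trace = ∑ i, (lam i : ℂ) ^ 2 := by
      have hmm : U * D * star U * (U * D * star U) = U * (D * D) * star U := by
        rw [show U * D * star U * (U * D * star U) = U * D * (star U * U) * (D * star U) from by
          simp only [mul_assoc], hUU, mul_one]
        simp only [mul_assoc]
      rw [hspec, hmm, Matrix.trace_mul_cycle, ← mul_assoc, hUU, one_mul, hD,
        Matrix.diagonal_mul_diagonal, Matrix.trace_diagonal]
      simp [sq]
    have hre : ∑ i, lam i ^ 2 = (∑ i, lam i) ^ 2 := by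
      have h := htr
      rw [htr1, htr2] at h
      exact_mod_cast h
    have hnn : ∀ i, 0 ≤ lam i := hσ.eigenvalues_nonneg
    have hd : ∑ i, ∑ j ∈ Finset.univ.erase i, lam i * lam j = 0 := by
      have h1 : (∑ i, lam i) ^ 2 = ∑ i, ∑ j, lam i * lam j := by
        rw [sq, Finset.sum_mul_sum]
      have h2 : ∀ i : n, ∑ j, lam i * lam j
          = lam i ^ 2 + ∑ j ∈ Finset.univ.erase i, lam i * lam j := by
        intro i
        rw [← Finset.add_sum_erase _ _ (Finset.mem_univ i), sq]
      simp_rw [h2] at h1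
      rw [Finset.sum_add_distrib, ← hre] at h1
      linarith
    have hcross : ∀ i j, i ≠ j → lam i * lam j = 0 := by
      intro i j hij
      have houter := (Finset.sum_eq_zero_iff_of_nonneg (fun i _ =>
        Finset.sum_nonneg fun j _ => mul_nonneg (hnn i) (hnn j))).mp hd i (Finset.mem_univ i)
      exact (Finset.sum_eq_zero_iff_of_nonneg (fun j _ =>
        mul_nonneg (hnn i) (hnn j))).mp houter j (Finset.mem_erase.mpr ⟨Ne.symm hij, Finset.mem_univ j⟩)
    have hne : ∃ p, lam p ≠ 0 := by
      by_contra h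
      push_neg at h
      apply hσ0
      rw [hspec]
      have hD0 : D = 0 := by
        ext i j
        by_cases hij : i = j <;> simp [hD, Matrix.diagonal, hij, h]
      rw [hD0, Matrix.mul_zero, Matrix.zero_mul]
    obtain ⟨p, hp⟩ := hne
    have hzero : ∀ k, k ≠ p → lam k = 0 := by
      intro k hk
      have := hcross k p hk
      rcases mul_eq_zero.mp this with h | h
      · exact h
      · exact absurd h hp
    set ψ : n → ℂ := fun i => (Real.sqrt (lam p) : ℂ) * U i p with hψdef
    have hform : σ = Matrix.vecMulVec ψ (star ψ) := by
      ext i j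
      rw [hspec]
      rw [Matrix.vecMulVec_apply]
      rw [Matrix.mul_apply]
      simp only [hD, Matrix.mul_diagonal, Matrix.star_apply, Function.comp_apply, hψdef,
        Pi.star_apply]
      rw [Finset.sum_eq_single p]
      · have key : (RCLike.ofReal (lam p) : ℂ) = (Real.sqrt (lam p) : ℂ) * (Real.sqrt (lam p) : ℂ) := by
          rw [← Complex.ofReal_mul, Real.mul_self_sqrt (hnn p)]
          rfl
        rw [key]
        simp only [star_mul', Complex.star_def, Complex.conj_ofReal]
        ring
      · intro k _ hk
        simp [hzero k hk]
      · intro h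
        exact absurd (Finset.mem_univ p) h
    refine ⟨ψ, ?_, hform⟩
    intro hψ0
    apply hσ0
    rw [hform, hψ0]
    ext i j
    simp [Matrix.vecMulVec_apply]
  · rintro ⟨ψ, hψ, rfl⟩
    rw [Matrix.trace, Matrix.trace]
    simp only [Matrix.diag_apply, Matrix.mul_apply, Matrix.vecMulVec_apply, Pi.star_apply]
    rw [sq, Finset.sum_mul_sum]
    congr 1
    ext i
    congr 1
    ext j
    ring
end

section
/- Let n and m be finite types, τ : Matrix n n ℂ and ξ : Matrix m m ℂ positive semidefinite matrices with τ ≠ 0. Suppose (τ * τ).trace = (τ.trace)^2 and ((τ ⊗ₖ ξ) * (τ ⊗ₖ ξ)).trace = ((τ ⊗ₖ ξ).trace)^2. Then (ξ * ξ).trace = (ξ.trace)^2. -/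
open Matrix Kronecker ComplexOrder

lemma trace_conjTranspose_mul_self_eq_zero_iff
    {k l : Type*} [Fintype k] [Fintype l] (A : Matrix k l ℂ) :
    (Aᴴ * A).trace = 0 ↔ A = 0 := by
  constructor
  · intro h
    have h' : (∑ j, ∑ i, Complex.normSq (A i j) : ℝ) = 0 := by
      have : (Aᴴ * A).trace = ((∑ j, ∑ i, Complex.normSq (A i j) : ℝ) : ℂ) := by
        simp [Matrix.trace, Matrix.mul_apply, Matrix.diag, Matrix.conjTranspose_apply,
          Complex.normSq_eq_conj_mul_self]
      rw [this] at h
      exact_mod_cast h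
    ext i j
    have := (Finset.sum_eq_zero_iff_of_nonneg (fun j _ => Finset.sum_nonneg
      (fun i _ => Complex.normSq_nonneg (A i j)))).mp h' j (Finset.mem_univ j)
    have := (Finset.sum_eq_zero_iff_of_nonneg
      (fun i _ => Complex.normSq_nonneg (A i j))).mp this i (Finset.mem_univ i)
    simpa [Complex.normSq_eq_zero] using this
  · rintro rfl; simp

theorem ancilla_factor_is_pure
    {n m : Type*} [Fintype n] [Fintype m]
    (τ : Matrix n n ℂ) (ξ : Matrix m m ℂ)
    (hτ : τ.PosSemidef) (hξ : ξ.PosSemidef) (hτ0 : τ ≠ 0)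
    (hτpure : (τ * τ).trace = τ.trace ^ 2)
    (hpure : ((τ ⊗ₖ ξ) * (τ ⊗ₖ ξ)).trace = ((τ ⊗ₖ ξ).trace) ^ 2) :
    (ξ * ξ).trace = ξ.trace ^ 2 := by
  have htr : τ.trace ≠ 0 := by
    intro h0
    apply hτ0
    have : (τᴴ * τ).trace = 0 := by
      rw [hτ.1.eq, hτpure, h0]; ring
    exact (trace_conjTranspose_mul_self_eq_zero_iff τ).mp this
  rw [← mul_kronecker_mul, trace_kronecker, trace_kronecker, mul_pow, hτpure] at hpure
  exact mul_left_cancel₀ (pow_ne_zero 2 htr) hpure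
end

section
/- Let H and A be vector spaces over ℂ. Let U : H → H be an injective ℂ-linear map such that there exist ψ₁, ψ₂ ∈ H with U ψ₁ and U ψ₂ linearly independent. Let C : H ⊗[ℂ] A → H ⊗[ℂ] A be a ℂ-linear map and a ∈ A a fixed vector. Suppose that for every ψ ∈ H there exists a vector g ∈ A such that C (ψ ⊗ₜ a) = (U ψ) ⊗ₜ g. Then there exists a single vector b ∈ A such that C (ψ ⊗ₜ a) = (U ψ) ⊗ₜ b for every ψ ∈ H. -/
open TensorProduct

lemma exists_dual_fin2 {H : Type*} [AddCommGroup H] [Module ℂ H]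
    {x y : H} (hli : LinearIndependent ℂ ![x, y]) (i : Fin 2) :
    ∃ f : H →ₗ[ℂ] ℂ, ∀ j, f (![x, y] j) = if j = i then 1 else 0 := by
  obtain ⟨g, hg⟩ := LinearMap.exists_extend ((Module.Basis.span hli).coord i)
  refine ⟨g, fun j => ?_⟩
  have := congrArg (fun m => m (Module.Basis.span hli j)) hg
  simp only [LinearMap.comp_apply, Submodule.subtype_apply] at this
  rw [Module.Basis.span_apply] at this
  rw [this, Module.Basis.coord_apply, ← Module.Basis.span_apply hli j, Module.Basis.repr_self]
  simp [Finsupp.single_apply, eq_comm]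

lemma tmul_pair_eq_zero {H A : Type*} [AddCommGroup H] [Module ℂ H]
    [AddCommGroup A] [Module ℂ A] {x y : H} (hli : LinearIndependent ℂ ![x, y])
    {u v : A} (h : x ⊗ₜ[ℂ] u + y ⊗ₜ[ℂ] v = 0) : u = 0 ∧ v = 0 := by
  have key : ∀ i : Fin 2, ![u, v] i = 0 := by
    intro i
    obtain ⟨f, hf⟩ := exists_dual_fin2 hli i
    have hmap := congrArg ((TensorProduct.lid ℂ A).toLinearMap ∘ₗ LinearMap.rTensor A f) h
    have h0 := hf 0
    have h1 := hf 1
    simp only [Matrix.cons_val_zero, Matrix.cons_val_one, Matrix.head_cons] at h0 h1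
    fin_cases i <;>
      simpa [h0, h1, TensorProduct.smul_tmul', map_add] using hmap
  exact ⟨key 0, key 1⟩

theorem ancilla_factor_constant
    {H A : Type*} [AddCommGroup H] [Module ℂ H] [AddCommGroup A] [Module ℂ A]
    (U : H →ₗ[ℂ] H) (hUinj : Function.Injective U)
    (hUrank : ∃ ψ₁ ψ₂ : H, LinearIndependent ℂ ![U ψ₁, U ψ₂])
    (C : H ⊗[ℂ] A →ₗ[ℂ] H ⊗[ℂ] A) (a : A)
    (h : ∀ ψ : H, ∃ g : A, C (ψ ⊗ₜ[ℂ] a) = U ψ ⊗ₜ[ℂ] g) :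
    ∃ b : A, ∀ ψ : H, C (ψ ⊗ₜ[ℂ] a) = U ψ ⊗ₜ[ℂ] b := by
  obtain ⟨ψ₁, ψ₂, hli⟩ := hUrank
  have hli2 := linearIndependent_fin2.mp hli
  simp only [Matrix.cons_val_zero, Matrix.cons_val_one, Matrix.head_cons] at hli2
  have hU1 : U ψ₁ ≠ 0 := fun h0 => hli2.2 0 (by simp [h0])
  -- pairwise equality of ancilla factors
  have step : ∀ (χ₁ χ₂ : H) (c₁ c₂ : A), LinearIndependent ℂ ![U χ₁, U χ₂] →
      C (χ₁ ⊗ₜ[ℂ] a) = U χ₁ ⊗ₜ[ℂ] c₁ → C (χ₂ ⊗ₜ[ℂ] a) = U χ₂ ⊗ₜ[ℂ] c₂ → c₁ = c₂ := by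
    intro χ₁ χ₂ c₁ c₂ hli' h1 h2
    obtain ⟨g', hg'⟩ := h (χ₁ + χ₂)
    have hz : U χ₁ ⊗ₜ[ℂ] (g' - c₁) + U χ₂ ⊗ₜ[ℂ] (g' - c₂) = 0 := by
      have e : C ((χ₁ + χ₂) ⊗ₜ[ℂ] a) = C (χ₁ ⊗ₜ[ℂ] a) + C (χ₂ ⊗ₜ[ℂ] a) := by
        rw [add_tmul, map_add]
      rw [hg', h1, h2, map_add, add_tmul] at e
      rw [tmul_sub, tmul_sub, sub_add_sub_comm, e, sub_self]
    obtain ⟨e1, e2⟩ := tmul_pair_eq_zero hli' hz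
    rw [← sub_eq_zero.mp e1, ← sub_eq_zero.mp e2]
  obtain ⟨g₁, hg₁⟩ := h ψ₁
  obtain ⟨g₂, hg₂⟩ := h ψ₂
  have hg21 : g₂ = g₁ := by
    refine step ψ₂ ψ₁ g₂ g₁ ?_ hg₂ hg₁
    rw [linearIndependent_fin2]
    simp only [Matrix.cons_val_zero, Matrix.cons_val_one, Matrix.head_cons]
    refine ⟨hU1, fun c hc => ?_⟩
    rcases eq_or_ne c 0 with rfl | hc0
    · exact hli2.1 (by simpa using hc.symm)
    · exact hli2.2 c⁻¹ (by rw [← hc, smul_smul, inv_mul_cancel₀ hc0, one_smul])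
  refine ⟨g₁, fun ψ => ?_⟩
  obtain ⟨g, hg⟩ := h ψ
  rcases eq_or_ne ψ 0 with rfl | hψ
  · simp
  · have hUψ : U ψ ≠ 0 := fun h0 => hψ (hUinj (by simp [h0]))
    by_cases hcase : LinearIndependent ℂ ![U ψ, U ψ₁]
    · rw [hg, step ψ ψ₁ g g₁ hcase hg hg₁]
    · have hdep : ∃ c : ℂ, c • U ψ₁ = U ψ := by
        by_contra hno
        push_neg at hno
        refine hcase (linearIndependent_fin2.mpr ?_)
        simp only [Matrix.cons_val_zero, Matrix.cons_val_one, Matrix.head_cons]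
        exact ⟨hU1, hno⟩
      obtain ⟨c, hc⟩ := hdep
      have hc0 : c ≠ 0 := by rintro rfl; exact hUψ (by simpa using hc.symm)
      have hli' : LinearIndependent ℂ ![U ψ, U ψ₂] := by
        rw [linearIndependent_fin2]
        simp only [Matrix.cons_val_zero, Matrix.cons_val_one, Matrix.head_cons]
        refine ⟨hli2.1, fun d hd => ?_⟩
        refine hli2.2 (c⁻¹ * d) ?_
        rw [mul_smul, hd, ← hc, smul_smul, inv_mul_cancel₀ hc0, one_smul]
      rw [hg, step ψ ψ₂ g g₂ hli' hg hg₂, hg21]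
end

section
/- Let n and m be finite types. For ψ : n → ℂ and a : m → ℂ, write ψ ⊠ a : n × m → ℂ for the vector with (ψ ⊠ a) (i, j) = ψ i * a j. Let C : Matrix (n × m) (n × m) ℂ, let U : Matrix n n ℂ satisfy Uᴴ * U = 1, and let a : m → ℂ, b : m → ℂ. Suppose C *ᵥ (ψ ⊠ a) = (U *ᵥ ψ) ⊠ b for every ψ : n → ℂ. Then for every ψ : n → ℂ, ∑ over (i,j) of ‖(C *ᵥ (ψ ⊠ a)) (i, j)‖² = (∑ j, ‖b j‖²) * (∑ i, ‖ψ i‖²). In particular, if ∑ j, ‖a j‖² = 1, the probability ∑ ‖(C *ᵥ (ψ ⊠ a)) (i,j)‖² / ∑ ‖(ψ ⊠ a) (i,j)‖² equals ∑ j, ‖b j‖², independently of ψ. -/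
open Matrix

lemma sum_norm_sq_eq_re_dot {n : Type*} [Fintype n] (v : n → ℂ) :
    ∑ i, ‖v i‖ ^ 2 = (star v ⬝ᵥ v).re := by
  simp only [dotProduct, Complex.re_sum, Pi.star_apply]
  refine Finset.sum_congr rfl fun i _ => ?_
  rw [Complex.star_def, mul_comm, Complex.mul_conj]
  simp [Complex.normSq_eq_norm_sq, ← Complex.ofReal_pow]

lemma unitary_norm_preserve {n : Type*} [Fintype n] [DecidableEq n]
    (U : Matrix n n ℂ) (hU : Uᴴ * U = 1) (ψ : n → ℂ) :
    ∑ i, ‖(U *ᵥ ψ) i‖ ^ 2 = ∑ i, ‖ψ i‖ ^ 2 := by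
  rw [sum_norm_sq_eq_re_dot, sum_norm_sq_eq_re_dot]
  congr 1
  rw [star_mulVec, dotProduct_mulVec, vecMul_vecMul, hU, vecMul_one]

theorem branch_probability_input_independent
    {n m : Type*} [Fintype n] [Fintype m] [DecidableEq n]
    (C : Matrix (n × m) (n × m) ℂ)
    (U : Matrix n n ℂ) (hU : Uᴴ * U = 1)
    (a b : m → ℂ)
    (h : ∀ ψ : n → ℂ,
      C *ᵥ (fun p : n × m => ψ p.1 * a p.2) = fun p : n × m => (U *ᵥ ψ) p.1 * b p.2) :
    (∀ ψ : n → ℂ,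
      ∑ p : n × m, ‖(C *ᵥ (fun q : n × m => ψ q.1 * a q.2)) p‖ ^ 2
        = (∑ j, ‖b j‖ ^ 2) * (∑ i, ‖ψ i‖ ^ 2)) ∧
    ((∑ j, ‖a j‖ ^ 2) = 1 → ∀ ψ : n → ℂ, ψ ≠ 0 →
      (∑ p : n × m, ‖(C *ᵥ (fun q : n × m => ψ q.1 * a q.2)) p‖ ^ 2)
        / (∑ p : n × m, ‖ψ p.1 * a p.2‖ ^ 2)
        = ∑ j, ‖b j‖ ^ 2) := by
  have key : ∀ ψ : n → ℂ,
      ∑ p : n × m, ‖(C *ᵥ (fun q : n × m => ψ q.1 * a q.2)) p‖ ^ 2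
        = (∑ j, ‖b j‖ ^ 2) * (∑ i, ‖ψ i‖ ^ 2) := by
    intro ψ
    rw [h ψ]
    rw [Fintype.sum_prod_type]
    simp only [norm_mul, mul_pow]
    rw [← Finset.sum_mul_sum]
    rw [unitary_norm_preserve U hU ψ, mul_comm]
  refine ⟨key, fun ha ψ hψ => ?_⟩
  have hden : ∑ p : n × m, ‖ψ p.1 * a p.2‖ ^ 2 = ∑ i, ‖ψ i‖ ^ 2 := by
    rw [Fintype.sum_prod_type]
    simp only [norm_mul, mul_pow]
    rw [← Finset.sum_mul_sum]
    rw [ha, mul_one]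
  have hpos : (0:ℝ) < ∑ i, ‖ψ i‖ ^ 2 := by
    rcases Function.ne_iff.mp hψ with ⟨i, hi⟩
    refine Finset.sum_pos' (fun j _ => by positivity) ⟨i, Finset.mem_univ i, ?_⟩
    simpa using pow_pos (norm_pos_iff.mpr hi) 2
  rw [key ψ, hden, mul_div_assoc, div_self hpos.ne', mul_one]
end

section
/- Let n and m be finite types with n having at least two elements. Let U : Matrix n n ℂ be unitary (Uᴴ * U = 1 and U * Uᴴ = 1), let a : m → ℂ satisfy ∑ j, ‖a j‖² = 1, and let C : Matrix (n × m) (n × m) ℂ. For X : Matrix (n × m) (n × m) ℂ, define the partial trace Tr_A(X) : Matrix n n ℂ by Tr_A(X) i i' = ∑ j, X (i, j) (i', j). Suppose that for every nonzero ψ : n → ℂ there exists a real c > 0 such that Tr_A(C * ((Matrix.vecMulVec ψ (star ψ)) ⊗ₖ (Matrix.vecMulVec a (star a))) * Cᴴ) = c • (U * Matrix.vecMulVec ψ (star ψ) * Uᴴ). Then there exists b : m → ℂ with ∑ j, ‖b j‖² > 0 such that for every ρ : Matrix n n ℂ: C * (ρ ⊗ₖ Matrix.vecMulVec a (star a)) *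 Cᴴ = (U * ρ * Uᴴ) ⊗ₖ Matrix.vecMulVec b (star b); consequently, for every nonzero positive semidefinite ρ, (C * (ρ ⊗ₖ Matrix.vecMulVec a (star a)) * Cᴴ).trace = (∑ j, ‖b j‖²) * ρ.trace, so the probability of following the branch is ∑ j, ‖b j‖², independent of ρ. -/
open Matrix Kronecker ComplexOrder

lemma aux_sandwich {α β : Type*} [Fintype β] (A : Matrix α β ℂ) (x y : β → ℂ) :
    A * vecMulVec x (star y) * Aᴴ = vecMulVec (A *ᵥ x) (star (A *ᵥ y)) := by
  rw [vecMulVec_eq Unit, vecMulVec_eq Unit, ← Matrix.mul_assoc A,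
    Matrix.mul_assoc (A * replicateCol Unit x), ← replicateCol_mulVec, ← replicateRow_vecMul, ← star_mulVec]

lemma aux_kron_vmv {n m : Type*} (x y : n → ℂ) (u v : m → ℂ) :
    vecMulVec x y ⊗ₖ vecMulVec u v
      = vecMulVec (fun p : n × m => x p.1 * u p.2) (fun p : n × m => y p.1 * v p.2) := by
  ext p q
  simp only [Matrix.kroneckerMap_apply, vecMulVec_apply]
  ring

lemma aux_sum_kron {ι n m : Type*} [Fintype m] (s : Finset ι)
    (A : ι → Matrix n n ℂ) (B : Matrix m m ℂ) :
    (∑ i ∈ s, A i) ⊗ₖ B = ∑ i ∈ s, A i ⊗ₖ B := by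
  ext p q
  simp [Matrix.kroneckerMap_apply, Matrix.sum_apply, Finset.sum_mul]

lemma rank_one_sum {n m : Type*} [Fintype n] [Fintype m] (w : n → m → ℂ) (u : n → ℂ)
    (hu : u ≠ 0)
    (heq : ∀ i i', ∑ j, w i j * star (w i' j) = u i * star (u i')) :
    ∃ β : m → ℂ, ∀ i j, w i j = u i * β j := by
  classical
  have hzs : ∀ z : ℂ, z * star z = (Complex.normSq z : ℂ) := fun z => Complex.mul_conj z
  have hsz : ∀ z : ℂ, star z * z = (Complex.normSq z : ℂ) := fun z => by
    rw [mul_comm]; exact Complex.mul_conj z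
  have key : ∀ x : n → ℂ, ∑ j, (∑ i, star (x i) * w i j) * star (∑ i, star (x i) * w i j)
      = (∑ i, star (x i) * u i) * star (∑ i, star (x i) * u i) := by
    intro x
    have e1 : ∀ v : n → ℂ, star (∑ i, star (x i) * v i) = ∑ i, x i * star (v i) := by
      intro v
      rw [star_sum]
      exact Finset.sum_congr rfl fun i _ => by rw [star_mul', star_star]
    simp_rw [e1, Finset.sum_mul_sum]
    rw [Finset.sum_comm]
    refine Finset.sum_congr rfl fun i _ => ?_
    rw [Finset.sum_comm]
    refine Finset.sum_congr rfl fun i' _ => ?_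
    calc ∑ j, star (x i) * w i j * (x i' * star (w i' j))
        = (star (x i) * x i') * ∑ j, w i j * star (w i' j) := by
          rw [Finset.mul_sum]; exact Finset.sum_congr rfl fun j _ => by ring
      _ = star (x i) * u i * (x i' * star (u i')) := by rw [heq i i']; ring
  have keyR : ∀ x : n → ℂ, ∑ j, Complex.normSq (∑ i, star (x i) * w i j)
      = Complex.normSq (∑ i, star (x i) * u i) := by
    intro x
    have hk := key x
    simp_rw [hzs] at hk
    exact_mod_cast hk
  obtain ⟨i0, hi0⟩ := Function.ne_iff.mp hu
  have hs : 0 < ∑ i, Complex.normSq (u i) :=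
    Finset.sum_pos' (fun i _ => Complex.normSq_nonneg _)
      ⟨i0, Finset.mem_univ _, Complex.normSq_pos.mpr hi0⟩
  set s : ℝ := ∑ i, Complex.normSq (u i) with hsdef
  have hsne : (s : ℂ) ≠ 0 := by exact_mod_cast hs.ne'
  have hipuu : ∑ i, star (u i) * u i = (s : ℂ) := by
    rw [hsdef]; push_cast; exact Finset.sum_congr rfl fun i _ => hsz (u i)
  refine ⟨fun j => (∑ i, star (u i) * w i j) / s, fun i j => ?_⟩
  set α : ℂ := (∑ i', star (u i') * w i' j) / s with hα
  set x : n → ℂ := fun i' => w i' j - α * u i' with hx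
  have hxu : ∑ i', star (x i') * u i' = 0 := by
    have e0 : ∀ i', star (x i') * u i'
        = star (w i' j) * u i' - star α * (star (u i') * u i') := by
      intro i'
      simp only [hx, star_sub, star_mul']
      ring
    rw [Finset.sum_congr rfl fun i' _ => e0 i', Finset.sum_sub_distrib, ← Finset.mul_sum, hipuu]
    have e2 : ∑ i', star (w i' j) * u i' = star (∑ i', star (u i') * w i' j) := by
      rw [star_sum]
      exact Finset.sum_congr rfl fun i' _ => by rw [star_mul', star_star]; ring
    rw [e2, hα, star_div₀]
    rw [show star ((s : ℝ) : ℂ) = ((s : ℝ) : ℂ) from Complex.conj_ofReal s]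
    field_simp
    ring
  have hxw : ∑ i', star (x i') * w i' j = 0 := by
    have h0 := keyR x
    rw [hxu, map_zero, Finset.sum_eq_zero_iff_of_nonneg
      (fun j' _ => Complex.normSq_nonneg _)] at h0
    exact Complex.normSq_eq_zero.mp (h0 j (Finset.mem_univ j))
  have hxx : x i = 0 := by
    have e3 : ∑ i', star (x i') * x i' = 0 := by
      have e4 : ∀ i', star (x i') * x i'
          = star (x i') * w i' j - α * (star (x i') * u i') := by
        intro i'
        simp only [hx]
        ring
      rw [Finset.sum_congr rfl fun i' _ => e4 i', Finset.sum_sub_distrib, hxw,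
        ← Finset.mul_sum, hxu]
      ring
    have e5 : ∑ i', Complex.normSq (x i') = 0 := by
      simp_rw [hsz] at e3
      exact_mod_cast e3
    exact Complex.normSq_eq_zero.mp
      ((Finset.sum_eq_zero_iff_of_nonneg (fun _ _ => Complex.normSq_nonneg _)).mp e5 i
        (Finset.mem_univ i))
  have h4 : w i j - α * u i = 0 := hxx
  rw [sub_eq_zero] at h4
  rw [h4, hα]
  ring

theorem input_independence_for_meas_trees
    {n m : Type*} [Fintype n] [Fintype m] [DecidableEq n] [Nontrivial n]
    (U : Matrix n n ℂ) (hU1 : Uᴴ * U = 1) (hU2 : U * Uᴴ = 1)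
    (a : m → ℂ) (ha : ∑ j, ‖a j‖ ^ 2 = 1)
    (C : Matrix (n × m) (n × m) ℂ)
    (h : ∀ ψ : n → ℂ, ψ ≠ 0 → ∃ c : ℝ, 0 < c ∧
      (Matrix.of fun i i' : n => ∑ j : m,
          (C * (Matrix.vecMulVec ψ (star ψ) ⊗ₖ Matrix.vecMulVec a (star a)) * Cᴴ)
            (i, j) (i', j))
        = (c : ℂ) • (U * Matrix.vecMulVec ψ (star ψ) * Uᴴ)) :
    ∃ b : m → ℂ, 0 < ∑ j, ‖b j‖ ^ 2 ∧
      (∀ ρ : Matrix n n ℂ,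
        C * (ρ ⊗ₖ Matrix.vecMulVec a (star a)) * Cᴴ
          = (U * ρ * Uᴴ) ⊗ₖ Matrix.vecMulVec b (star b)) ∧
      (∀ ρ : Matrix n n ℂ, ρ ≠ 0 → ρ.PosSemidef →
        (C * (ρ ⊗ₖ Matrix.vecMulVec a (star a)) * Cᴴ).trace
          = ((∑ j, ‖b j‖ ^ 2 : ℝ) : ℂ) * ρ.trace) := by
  classical
  have hsne' : ∀ p : n, (Pi.single p 1 : n → ℂ) ≠ 0 := by
    intro p h0
    have h1 := congrFun h0 p
    simp [Pi.single_eq_same] at h1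
  -- step A: rewrite the kronecker of rank ones
  have hstar : ∀ φ : n → ℂ, (fun p : n × m => star φ p.1 * star a p.2)
      = star (fun p : n × m => φ p.1 * a p.2) := by
    intro φ
    funext p
    simp [star_mul', mul_comm]
  have haveA : ∀ ψ φ : n → ℂ,
      C * (vecMulVec ψ (star φ) ⊗ₖ vecMulVec a (star a)) * Cᴴ
        = vecMulVec (C *ᵥ fun p : n × m => ψ p.1 * a p.2)
            (star (C *ᵥ fun p : n × m => φ p.1 * a p.2)) := by
    intro ψ φ
    rw [aux_kron_vmv, show (fun p : n × m => (star φ) p.1 * (star a) p.2)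
      = star (fun p : n × m => φ p.1 * a p.2) from hstar φ, aux_sandwich]
  -- step B: for each nonzero ψ, the output is a product vector
  have hB : ∀ ψ : n → ℂ, ψ ≠ 0 → ∃ β : m → ℂ, ∀ i j,
      (C *ᵥ fun p : n × m => ψ p.1 * a p.2) (i, j) = (U *ᵥ ψ) i * β j := by
    intro ψ hψ
    obtain ⟨c, hc, hmat⟩ := h ψ hψ
    simp only [haveA ψ ψ, aux_sandwich U ψ ψ] at hmat
    have hu0 : U *ᵥ ψ ≠ 0 := by
      intro h0
      apply hψ
      have h1 : Uᴴ *ᵥ (U *ᵥ ψ) = ψ := by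
        rw [Matrix.mulVec_mulVec, hU1, Matrix.one_mulVec]
      rw [← h1, h0, Matrix.mulVec_zero]
    have hsc : (Real.sqrt c : ℂ) ≠ 0 := by
      exact_mod_cast (Real.sqrt_pos.mpr hc).ne'
    have hcc : (Real.sqrt c : ℂ) * (Real.sqrt c : ℂ) = (c : ℂ) := by
      rw [← Complex.ofReal_mul, Real.mul_self_sqrt hc.le]
    set u' : n → ℂ := fun i => (Real.sqrt c : ℂ) * (U *ᵥ ψ) i with hu'
    have hu'0 : u' ≠ 0 := by
      intro h0
      apply hu0
      funext i
      have := congrFun h0 i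
      simp only [hu', Pi.zero_apply] at this
      exact (mul_eq_zero.mp this).resolve_left hsc
    have heq : ∀ i i', ∑ j, (C *ᵥ fun p : n × m => ψ p.1 * a p.2) (i, j)
        * star ((C *ᵥ fun p : n × m => ψ p.1 * a p.2) (i', j)) = u' i * star (u' i') := by
      intro i i'
      have h1 := congrFun (congrFun hmat i) i'
      simp only [Matrix.of_apply, Matrix.smul_apply, vecMulVec_apply, smul_eq_mul,
        Pi.star_apply] at h1
      rw [h1, hu']
      have : star ((Real.sqrt c : ℝ) : ℂ) = ((Real.sqrt c : ℝ) : ℂ) := Complex.conj_ofReal _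
      simp only [star_mul', this]
      rw [← hcc]
      ring
    obtain ⟨β, hβ⟩ := rank_one_sum
      (fun i j => (C *ᵥ fun p : n × m => ψ p.1 * a p.2) (i, j)) u' hu'0 heq
    refine ⟨fun j => (Real.sqrt c : ℂ) * β j, fun i j => ?_⟩
    rw [hβ i j, hu']
    ring
  -- step C: the ancilla factor is independent of the input
  have hBp : ∀ p : n, ∃ β : m → ℂ, ∀ i j,
      (C *ᵥ fun q : n × m => (Pi.single p 1 : n → ℂ) q.1 * a q.2) (i, j) = U i p * β j := by
    intro p
    obtain ⟨β, hβ⟩ := hB (Pi.single p 1) (hsne' _)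
    refine ⟨β, fun i j => ?_⟩
    rw [hβ]
    simp [Matrix.mulVec_single]
  choose β hβ using hBp
  have horth : ∀ p q : n, ∑ k, star (U k p) * U k q = if p = q then 1 else 0 := by
    intro p q
    have h1 := congrFun (congrFun hU1 p) q
    simpa [Matrix.mul_apply, Matrix.conjTranspose_apply, Matrix.one_apply] using h1
  obtain ⟨i₀, i₁, hne₀⟩ := exists_pair_ne n
  have hsame : ∀ p : n, β p = β i₀ := by
    intro p
    rcases eq_or_ne p i₀ with rfl | hp
    · rfl
    have hψne : (Pi.single i₀ 1 + Pi.single p 1 : n → ℂ) ≠ 0 := by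
      intro h0
      have h1 := congrFun h0 i₀
      simp [Pi.single_eq_same, Pi.single_eq_of_ne (Ne.symm hp)] at h1
    obtain ⟨β', hβ'⟩ := hB _ hψne
    have hval : ∀ i j, U i i₀ * (β i₀ j - β' j) + U i p * (β p j - β' j) = 0 := by
      intro i j
      have hsplit : (fun q : n × m => (Pi.single i₀ 1 + Pi.single p 1 : n → ℂ) q.1 * a q.2)
          = (fun q : n × m => (Pi.single i₀ 1 : n → ℂ) q.1 * a q.2)
            + fun q : n × m => (Pi.single p 1 : n → ℂ) q.1 * a q.2 := by
        funext q
        simp [add_mul]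
      have h2 := hβ' i j
      rw [hsplit, Matrix.mulVec_add] at h2
      have h3 : (U *ᵥ (Pi.single i₀ 1 + Pi.single p 1 : n → ℂ)) i = U i i₀ + U i p := by
        simp [Matrix.mulVec_add, Matrix.mulVec_single]
      rw [h3] at h2
      have h4 := hβ i₀ i j
      have h5 := hβ p i j
      simp only [Pi.add_apply] at h2
      rw [h4, h5] at h2
      linear_combination h2
  -- project onto the orthonormal columns of U
    have hzero : ∀ (q : n) (j : m),
        (if q = i₀ then 1 else 0 : ℂ) * (β i₀ j - β' j)
          + (if q = p then 1 else 0 : ℂ) * (β p j - β' j) = 0 := by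
      intro q j
      have h4 : ∑ i, star (U i q) * (U i i₀ * (β i₀ j - β' j) + U i p * (β p j - β' j))
          = 0 := by
        simp only [hval, mul_zero, Finset.sum_const_zero]
      have h5 : ∑ i, star (U i q) * (U i i₀ * (β i₀ j - β' j) + U i p * (β p j - β' j))
          = (∑ i, star (U i q) * U i i₀) * (β i₀ j - β' j)
            + (∑ i, star (U i q) * U i p) * (β p j - β' j) := by
        simp_rw [mul_add, ← mul_assoc]
        rw [Finset.sum_add_distrib, ← Finset.sum_mul, ← Finset.sum_mul]
      rw [h5, horth, horth] at h4
      exact h4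
    funext j
    have h6 := hzero i₀ j
    have h7 := hzero p j
    rw [if_pos rfl, if_neg (Ne.symm hp)] at h6
    rw [if_neg hp, if_pos rfl] at h7
    have h8 : β i₀ j = β' j := by linear_combination h6
    have h9 : β p j = β' j := by linear_combination h7
    rw [h8, h9]
  set b : m → ℂ := β i₀ with hbdef
  have hkeyfun : ∀ p : n, (C *ᵥ fun q : n × m => (Pi.single p 1 : n → ℂ) q.1 * a q.2)
      = fun q : n × m => U q.1 p * b q.2 := by
    intro p
    funext q
    obtain ⟨i, j⟩ := q
    have h1 := hβ p i j
    rw [hsame p] at h1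
    exact h1
  -- the star of a standard basis vector
  have hstarsingle : ∀ p : n, star (Pi.single p 1 : n → ℂ) = Pi.single p 1 := by
    intro p
    funext i
    rcases eq_or_ne i p with rfl | hip
    · simp
    · simp [Pi.single_eq_of_ne hip]
  -- step D: the main identity, first on basis matrices
  have term1 : ∀ p p' : n,
      C * (Matrix.single p p' (1 : ℂ) ⊗ₖ vecMulVec a (star a)) * Cᴴ
        = (U * Matrix.single p p' 1 * Uᴴ) ⊗ₖ vecMulVec b (star b) := by
    intro p p'
    have e1 : Matrix.single p p' (1 : ℂ)
        = vecMulVec (Pi.single p 1) (star (Pi.single p' 1)) := by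
      rw [Matrix.single_eq_single_vecMulVec_single, hstarsingle]
    rw [e1, haveA, aux_sandwich U, aux_kron_vmv, hkeyfun p, hkeyfun p',
      show (fun q : n × m => U q.1 p * b q.2)
          = fun q : n × m => (U *ᵥ (Pi.single p 1 : n → ℂ)) q.1 * b q.2 from by
        funext q; simp [Matrix.mulVec_single],
      show star (fun q : n × m => U q.1 p' * b q.2)
          = fun q : n × m => (star (U *ᵥ (Pi.single p' 1 : n → ℂ))) q.1 * (star b) q.2 from by
        funext q; simp [Matrix.mulVec_single, star_mul', Pi.star_apply]]
  have term : ∀ (p p' : n) (c : ℂ),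
      C * (Matrix.single p p' c ⊗ₖ vecMulVec a (star a)) * Cᴴ
        = (U * Matrix.single p p' c * Uᴴ) ⊗ₖ vecMulVec b (star b) := by
    intro p p' c
    have e0 : Matrix.single p p' c = c • Matrix.single p p' (1 : ℂ) := by
      rw [Matrix.smul_single, smul_eq_mul, mul_one]
    rw [e0, smul_kronecker, Matrix.mul_smul, Matrix.smul_mul, term1, Matrix.mul_smul,
      Matrix.smul_mul, smul_kronecker]
  have main : ∀ ρ : Matrix n n ℂ, C * (ρ ⊗ₖ vecMulVec a (star a)) * Cᴴ
      = (U * ρ * Uᴴ) ⊗ₖ vecMulVec b (star b) := by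
    intro ρ
    conv_lhs => rw [Matrix.matrix_eq_sum_single ρ]
    conv_rhs => rw [Matrix.matrix_eq_sum_single ρ]
    simp only [aux_sum_kron, Finset.sum_mul, Finset.mul_sum]
    exact Finset.sum_congr rfl fun p _ => Finset.sum_congr rfl fun p' _ => term p p' _
  -- positivity of the branch weight
  have hbne : b ≠ 0 := by
    intro hb0
    obtain ⟨c, hc, hmat⟩ := h (Pi.single i₀ 1) (hsne' _)
    have hM : C * (vecMulVec (Pi.single i₀ 1) (star (Pi.single i₀ 1))
        ⊗ₖ vecMulVec a (star a)) * Cᴴ = 0 := by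
      rw [main, hb0]
      ext p q
      simp [vecMulVec_apply]
    have h0 : (0 : Matrix n n ℂ)
        = (c : ℂ) • (U * vecMulVec (Pi.single i₀ 1) (star (Pi.single i₀ 1)) * Uᴴ) := by
      rw [← hmat]
      ext i i'
      simp only [Matrix.zero_apply, Matrix.of_apply, hM, Finset.sum_const_zero]
    have hcne : (c : ℂ) ≠ 0 := by exact_mod_cast hc.ne'
    have h1 : U * vecMulVec (Pi.single i₀ 1) (star (Pi.single i₀ 1)) * Uᴴ = 0 :=
      (smul_eq_zero.mp h0.symm).resolve_left hcne
    have e : Uᴴ * (U * vecMulVec (Pi.single i₀ 1) (star (Pi.single i₀ 1)) * Uᴴ) * U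
        = vecMulVec (Pi.single i₀ (1 : ℂ)) (star (Pi.single i₀ 1)) := by
      calc Uᴴ * (U * vecMulVec (Pi.single i₀ 1) (star (Pi.single i₀ 1)) * Uᴴ) * U
          = (Uᴴ * U) * vecMulVec (Pi.single i₀ 1) (star (Pi.single i₀ 1)) * (Uᴴ * U) := by
            simp only [Matrix.mul_assoc]
        _ = _ := by rw [hU1, Matrix.one_mul, Matrix.mul_one]
    rw [h1, Matrix.mul_zero, Matrix.zero_mul] at e
    have h2 := congrFun (congrFun e i₀) i₀
    simp [vecMulVec_apply, Pi.single_eq_same] at h2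
  obtain ⟨j₀, hj₀⟩ := Function.ne_iff.mp hbne
  refine ⟨b, ?_, main, ?_⟩
  · exact Finset.sum_pos' (fun j _ => by positivity)
      ⟨j₀, Finset.mem_univ _, pow_pos (norm_pos_iff.mpr hj₀) 2⟩
  · intro ρ _ _
    rw [main ρ, Matrix.trace_kronecker]
    have t1 : (U * ρ * Uᴴ).trace = ρ.trace := by
      rw [Matrix.trace_mul_cycle, hU1, Matrix.one_mul]
    have t2 : (vecMulVec b (star b)).trace = ((∑ j, ‖b j‖ ^ 2 : ℝ) : ℂ) := by
      rw [Matrix.trace, Complex.ofReal_sum]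
      refine Finset.sum_congr rfl fun j _ => ?_
      simp only [Matrix.diag_apply, vecMulVec_apply, Pi.star_apply]
      rw [show star (b j) = (starRingEnd ℂ) (b j) from rfl, Complex.mul_conj]
      congr 1
      rw [← Complex.sq_norm]
    rw [t1, t2]
    ring
end

section
/- Let n and m be finite types and I a finite index set. For ψ : n → ℂ and a : m → ℂ, write ψ ⊠ a : n × m → ℂ for the vector with (ψ ⊠ a) (i, j) = ψ i * a j. Let C : I → Matrix (n × m) (n × m) ℂ satisfy ∑ β, (C β)ᴴ * (C β) = 1, let U : Matrix n n ℂ, let a : m → ℂ satisfy ∑ j, ‖a j‖² = 1, and let b : I → (m → ℂ) be such that for every β ∈ I and every ψ : n → ℂ, (C β) *ᵥ (ψ ⊠ a) = (U *ᵥ ψ) ⊠ (b β). Then ((∑ β, ∑ j, ‖b β j‖²) : ℂ) • (Uᴴ * U) = 1. In particular, setting t = (∑ β, ∑ j, ‖b β j‖²)^(1/2), the matrix t • U is an isometry: (t • U)ᴴ * (t • U) = 1. -/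
open Matrix
set_option maxHeartbeats 1000000

private lemma sum_mulVec' {I n : Type*} [Fintype I] [Fintype n]
    (M : I → Matrix n n ℂ) (v : n → ℂ) :
    (∑ β, M β) *ᵥ v = ∑ β, M β *ᵥ v := by
  ext p
  simp only [Matrix.mulVec, dotProduct, Matrix.sum_apply, Finset.sum_apply,
    Finset.sum_mul]
  exact Finset.sum_comm

private lemma dotProduct_sum' {I n : Type*} [Fintype I] [Fintype n]
    (u : n → ℂ) (w : I → n → ℂ) :
    u ⬝ᵥ (∑ β, w β) = ∑ β, u ⬝ᵥ w β := by
  simp only [dotProduct, Finset.sum_apply, Finset.mul_sum]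
  exact Finset.sum_comm

theorem same_operator_along_every_branch_isometry
    {n m : Type*} [Fintype n] [Fintype m] [DecidableEq n] [DecidableEq m]
    {I : Type*} [Fintype I]
    (C : I → Matrix (n × m) (n × m) ℂ)
    (hC : ∑ β, (C β)ᴴ * C β = 1)
    (U : Matrix n n ℂ)
    (a : m → ℂ) (ha : ∑ j, ‖a j‖ ^ 2 = 1)
    (b : I → m → ℂ)
    (hb : ∀ (β : I) (ψ : n → ℂ),
      C β *ᵥ (fun p : n × m => ψ p.1 * a p.2) = fun p : n × m => (U *ᵥ ψ) p.1 * b β p.2) :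
    (((∑ β, ∑ j, ‖b β j‖ ^ 2 : ℝ) : ℂ) • (Uᴴ * U) = 1) ∧
      (((Real.sqrt (∑ β, ∑ j, ‖b β j‖ ^ 2) : ℝ) : ℂ) • U)ᴴ *
        (((Real.sqrt (∑ β, ∑ j, ‖b β j‖ ^ 2) : ℝ) : ℂ) • U) = 1 := by
  have hconj : ∀ z : ℂ, (starRingEnd ℂ) z * z = ((‖z‖ ^ 2 : ℝ) : ℂ) := by
    intro z
    rw [← Complex.normSq_eq_conj_mul_self, Complex.normSq_eq_norm_sq]
  have ha' : ∑ j, (starRingEnd ℂ) (a j) * a j = 1 := by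
    simp_rw [hconj]
    norm_cast
  have key : ((∑ β, ∑ j, ‖b β j‖ ^ 2 : ℝ) : ℂ) • (Uᴴ * U) = 1 := by
    ext i k
    have h1 := congrArg (fun M : Matrix (n × m) (n × m) ℂ =>
      star (fun p : n × m => (Pi.single i 1 : n → ℂ) p.1 * a p.2) ⬝ᵥ
        (M *ᵥ fun p : n × m => (Pi.single k 1 : n → ℂ) p.1 * a p.2)) hC
    simp only [sum_mulVec', dotProduct_sum', one_mulVec, ← Matrix.mulVec_mulVec] at h1
    have step : ∀ β : I,
        star (fun p : n × m => (Pi.single i 1 : n → ℂ) p.1 * a p.2) ⬝ᵥ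
          ((C β)ᴴ *ᵥ (C β *ᵥ fun p : n × m => (Pi.single k 1 : n → ℂ) p.1 * a p.2)) =
        star (C β *ᵥ fun p : n × m => (Pi.single i 1 : n → ℂ) p.1 * a p.2) ⬝ᵥ
          (C β *ᵥ fun p : n × m => (Pi.single k 1 : n → ℂ) p.1 * a p.2) := by
      intro β
      rw [Matrix.dotProduct_mulVec, ← Matrix.star_mulVec]
    simp only [step] at h1
    simp only [hb] at h1
    have hL : ∀ β : I,
        star (fun p : n × m => (U *ᵥ (Pi.single i 1 : n → ℂ)) p.1 * b β p.2) ⬝ᵥ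
          (fun p : n × m => (U *ᵥ (Pi.single k 1 : n → ℂ)) p.1 * b β p.2) =
        (∑ j, ((‖b β j‖ ^ 2 : ℝ) : ℂ)) * (Uᴴ * U) i k := by
      intro β
      simp only [dotProduct, Pi.star_apply, star_mul', Fintype.sum_prod_type,
        Matrix.mulVec_single, MulOpposite.op_one, one_smul, Matrix.col_apply, mul_one, Matrix.mul_apply, conjTranspose_apply,
        RCLike.star_def]
      conv_rhs => rw [Finset.sum_mul_sum]
      rw [Finset.sum_comm]
      refine Finset.sum_congr rfl fun j _ => Finset.sum_congr rfl fun l _ => ?_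
      rw [← hconj (b β j)]
      ring
    have hR : star (fun p : n × m => (Pi.single i 1 : n → ℂ) p.1 * a p.2) ⬝ᵥ
        (fun p : n × m => (Pi.single k 1 : n → ℂ) p.1 * a p.2) = if i = k then 1 else 0 := by
      have : star (fun p : n × m => (Pi.single i 1 : n → ℂ) p.1 * a p.2) ⬝ᵥ
          (fun p : n × m => (Pi.single k 1 : n → ℂ) p.1 * a p.2) =
          (∑ l, (starRingEnd ℂ) ((Pi.single i 1 : n → ℂ) l) * (Pi.single k 1 : n → ℂ) l) *
            (∑ j, (starRingEnd ℂ) (a j) * a j) := by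
        rw [Finset.sum_mul_sum]
        simp only [dotProduct, Pi.star_apply, star_mul', Fintype.sum_prod_type,
          RCLike.star_def]
        refine Finset.sum_congr rfl fun l _ => Finset.sum_congr rfl fun j _ => ?_
        ring
      rw [this, ha', mul_one]
      simp [Pi.single_apply, apply_ite, eq_comm]
    simp only [hL, hR] at h1
    rw [← Finset.sum_mul] at h1
    simp only [Matrix.smul_apply, Matrix.one_apply, smul_eq_mul]
    rw [← h1]
    push_cast
    ring
  refine ⟨key, ?_⟩
  have hs : (0:ℝ) ≤ ∑ β, ∑ j, ‖b β j‖ ^ 2 := Finset.sum_nonneg fun β _ => Finset.sum_nonneg fun j _ => sq_nonneg _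
  rw [conjTranspose_smul, Matrix.smul_mul, Matrix.mul_smul, smul_smul,
    Complex.star_def, Complex.conj_ofReal, ← Complex.ofReal_mul,
    Real.mul_self_sqrt hs]
  exact key
end
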